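/- arXiv:1807.10220 — 4 statements merged into one kernel-verified Lean document; each statement's English description precedes it below -/
import Mathlib

section
/- The Lagrange equilateral configuration is a relative equilibrium of the three-body problem: for any masses m₁, m₂, m₃ > 0 there exists an angular velocity ω > 0 such that three bodies placed at the vertices of an equilateral triangle of side a, each rotating uniformly about the common center of mass with angular velocity ω, solve the Newtonian equations of motion; moreover ω² = G(m₁+m₂+m₃)/a³. -/
open Finset

/-!
When all mutual distances equal `a`, the Newtonian acceleration of body `i` is
`(G / a³) ∑ⱼ mⱼ (qⱼ - qᵢ) = -(G M / a³) qᵢ`, because the center of mass is at the origin.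
A uniform rotation `e^{iωt} pᵢ` has acceleration `-ω² e^{iωt} pᵢ`, and it preserves both
the mutual distances and the center of mass, so `ω² = G M / a³` works at every time.
-/

theorem hasDerivAt_cexp_I_mul_mul (ω : ℝ) (c : ℂ) (t : ℝ) :
    HasDerivAt (fun s : ℝ => Complex.exp (Complex.I * (ω * s)) * c)
      (Complex.I * ω * Complex.exp (Complex.I * (ω * t)) * c) t := by
  have h := (((Complex.ofRealCLM.hasDerivAt (x := t)).const_mul (Complex.I * ω)).cexp).mul_const c
  simpa [mul_assoc, mul_comm, mul_left_comm] using h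

theorem deriv_deriv_cexp_I_mul_mul (ω : ℝ) (c : ℂ) (t : ℝ) :
    deriv (deriv (fun s : ℝ => Complex.exp (Complex.I * (ω * s)) * c)) t
      = -(ω ^ 2) • (Complex.exp (Complex.I * (ω * t)) * c) := by
  have hd : deriv (fun s : ℝ => Complex.exp (Complex.I * (ω * s)) * c)
      = fun s : ℝ => Complex.exp (Complex.I * (ω * s)) * (Complex.I * ω * c) := by
    funext s
    rw [(hasDerivAt_cexp_I_mul_mul ω c s).deriv]
    ring
  rw [hd, (hasDerivAt_cexp_I_mul_mul ω _ t).deriv, Complex.real_smul]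
  push_cast
  linear_combination ((ω : ℂ) ^ 2 * Complex.exp (Complex.I * (ω * t)) * c) * Complex.I_sq

section

variable {ι E : Type*} [Fintype ι] [DecidableEq ι]

theorem sum_sdiff_singleton_smul_sub [AddCommGroup E] [Module ℝ E] (m : ι → ℝ) (q : ι → E)
    (hcom : ∑ j, m j • q j = 0) (i : ι) :
    ∑ j ∈ univ \ {i}, m j • (q j - q i) = -(∑ j, m j) • q i := by
  rw [sum_subset (subset_univ _) fun j _ hj => by simp_all]
  simp only [smul_sub, sum_sub_distrib, hcom, ← sum_smul, zero_sub, neg_smul]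

theorem sum_gravitationalAccel_of_equidistant [SeminormedAddCommGroup E] [NormedSpace ℝ E]
    (G a : ℝ) (m : ι → ℝ) (q : ι → E) (hside : ∀ i j, i ≠ j → dist (q i) (q j) = a)
    (hcom : ∑ j, m j • q j = 0) (i : ι) :
    ∑ j ∈ univ \ {i}, (G * m j / dist (q j) (q i) ^ 3) • (q j - q i)
      = -(G * (∑ j, m j) / a ^ 3) • q i := by
  have hterm : ∀ j ∈ univ \ {i}, (G * m j / dist (q j) (q i) ^ 3) • (q j - q i)
      = (G / a ^ 3) • (m j • (q j - q i)) := by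
    intro j hj
    rw [hside j i (by simpa using hj), smul_smul]
    ring_nf
  rw [sum_congr rfl hterm, ← smul_sum, sum_sdiff_singleton_smul_sub m q hcom, smul_smul]
  ring_nf

end

theorem dist_mul_left_of_norm_eq_one {α : Type*} [NormedDivisionRing α] {u : α} (hu : ‖u‖ = 1)
    (z w : α) :
    dist (u * z) (u * w) = dist z w := by
  rw [dist_eq_norm, dist_eq_norm, ← mul_sub, norm_mul, hu, one_mul]

/-- The Lagrange equilateral configuration is a relative equilibrium of the
three-body problem: for any positive masses placed at the vertices of an
equilateral triangle of side `a` with center of mass at the origin, there is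
`ω > 0` with `ω² = G(m₁+m₂+m₃)/a³` such that uniform rotation with angular
velocity `ω` solves the Newtonian equations of motion. -/
theorem lagrange_equilateral_relative_equilibrium
    (G a : ℝ) (hG : 0 < G) (ha : 0 < a)
    (m : Fin 3 → ℝ) (hm : ∀ i, 0 < m i)
    (p : Fin 3 → ℂ)
    (hside : ∀ i j : Fin 3, i ≠ j → dist (p i) (p j) = a)
    (hcom : (∑ i, m i • p i) = 0) :
    ∃ ω : ℝ, 0 < ω ∧ ω ^ 2 = G * (m 0 + m 1 + m 2) / a ^ 3 ∧
      ∀ i : Fin 3, ∀ t : ℝ,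
        deriv (deriv (fun s : ℝ => Complex.exp (Complex.I * (ω * s)) * p i)) t
          = ∑ j ∈ Finset.univ \ {i},
              (G * m j /
                dist (Complex.exp (Complex.I * (ω * t)) * p j)
                  (Complex.exp (Complex.I * (ω * t)) * p i) ^ 3) •
                (Complex.exp (Complex.I * (ω * t)) * p j
                  - Complex.exp (Complex.I * (ω * t)) * p i) := by
  have hω2 : 0 < G * (m 0 + m 1 + m 2) / a ^ 3 := by
    have := hm 0; have := hm 1; have := hm 2; positivity
  refine ⟨√(G * (m 0 + m 1 + m 2) / a ^ 3), Real.sqrt_pos.mpr hω2, Real.sq_sqrt hω2.le, ?_⟩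
  intro i t
  set u := Complex.exp (Complex.I * (√(G * (m 0 + m 1 + m 2) / a ^ 3) * t))
  have hu : ‖u‖ = 1 := by simp [u, Complex.norm_exp]
  have hrot_side : ∀ j k, j ≠ k → dist (u * p j) (u * p k) = a := fun j k hjk =>
    (dist_mul_left_of_norm_eq_one hu _ _).trans (hside j k hjk)
  have hrot_com : ∑ j, m j • (u * p j) = 0 := by
    simp only [← mul_smul_comm, ← mul_sum, hcom, mul_zero]
  rw [deriv_deriv_cexp_I_mul_mul, sum_gravitationalAccel_of_equidistant G a m (fun j => u * p j)
    hrot_side hrot_com, Real.sq_sqrt hω2.le, Fin.sum_univ_three]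
end

section
/- For any positive masses m₁, m₂, m₃ and any ordering of the three bodies on a line, there exists a collinear central configuration (Euler configuration): there exist distinct collinear positions q₁, q₂, q₃ with center of mass at the origin and a constant λ > 0 such that the gravitational acceleration on each body equals −λ qᵢ. -/
/-!
Place the bodies at `0, 1, 1 + x`. Accelerations are invariant under translation and their
mass-weighted sum vanishes (Newton's third law), so the configuration translated to its centre of
mass is central with constant `λ` as soon as `aᵢ + λ pᵢ` is independent of `i`. Choosing
`λ = (a₀ - a₂) / (p₂ - p₀) > 0` makes this automatic for the outer bodies, and for the middle body
it becomes Euler's quintic in `x`, which is negative at `0` and positive for large `x`, hence has a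
positive root.
-/

open Finset

-- Euler's quintic for masses `a, b, c` at `0, 1, 1 + x`.
def eulerQuintic (a b c x : ℝ) : ℝ :=
  (a + b) * x ^ 5 + (3 * a + 2 * b) * x ^ 4 + (3 * a + b) * x ^ 3
    - (b + 3 * c) * x ^ 2 - (2 * b + 3 * c) * x - (b + c)

lemma eulerQuintic_pos {a b c x : ℝ} (ha : 0 ≤ a) (hb : 0 < b) (hc : 0 ≤ c) (hx : 1 ≤ x)
    (hbig : 4 * b + 7 * c < (a + b) * x ^ 3) : 0 < eulerQuintic a b c x := by
  have hx2 : 1 ≤ x ^ 2 := one_le_pow₀ hx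
  calc (0 : ℝ) < x ^ 2 * ((a + b) * x ^ 3 - (4 * b + 7 * c)) := by
        have := sub_pos.2 hbig; positivity
    _ ≤ eulerQuintic a b c x := by
        unfold eulerQuintic
        have hx0 : 0 ≤ x := by linarith
        nlinarith [mul_nonneg (by linarith : 0 ≤ 3 * a + 2 * b) (pow_nonneg hx0 4),
          mul_nonneg (by linarith : 0 ≤ 3 * a + b) (pow_nonneg hx0 3),
          mul_le_mul_of_nonneg_left hx2 (by linarith : 0 ≤ 2 * b + 3 * c),
          mul_le_mul_of_nonneg_left hx2 (by linarith : 0 ≤ b + c)]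

lemma exists_pos_eulerQuintic_eq_zero {a b c : ℝ} (ha : 0 ≤ a) (hb : 0 < b) (hc : 0 ≤ c) :
    ∃ x, 0 < x ∧ eulerQuintic a b c x = 0 := by
  set X := 1 + (4 * b + 7 * c) / (a + b)
  have hX : 1 ≤ X := le_add_of_nonneg_right (by positivity)
  have hbig : 4 * b + 7 * c < (a + b) * X ^ 3 := by
    calc 4 * b + 7 * c < (a + b) * X := by
          simp only [X, mul_add, mul_div_cancel₀ _ (by positivity : a + b ≠ 0)]; linarith
      _ ≤ (a + b) * X ^ 3 := by gcongr; exact le_self_pow₀ hX (by norm_num)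
  have hcont : ContinuousOn (eulerQuintic a b c) (Set.Icc 0 X) := by
    unfold eulerQuintic; fun_prop
  have h0 : eulerQuintic a b c 0 < 0 := by simp [eulerQuintic]; linarith
  obtain ⟨x, hx, hroot⟩ := intermediate_value_Ioo (by linarith) hcont
    ⟨h0, eulerQuintic_pos ha hb hc hX hbig⟩
  exact ⟨x, hx.1, hroot⟩

section Gravity

variable {ι : Type*} [Fintype ι]

lemma sum_mul_sub_centerMass {m : ι → ℝ} (hm : ∑ i, m i ≠ 0) (p : ι → ℝ) :
    ∑ i, m i * (p i - univ.centerMass m p) = 0 := by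
  simp only [Finset.centerMass, smul_eq_mul, mul_sub, sum_sub_distrib, ← sum_mul]
  field_simp
  ring

variable [DecidableEq ι]

noncomputable def gravAccel (G : ℝ) (m q : ι → ℝ) (i : ι) : ℝ :=
  ∑ j ∈ univ \ {i}, G * m j * (q j - q i) / |q j - q i| ^ 3

-- The diagonal term is `0 / 0 = 0`.
lemma gravAccel_eq_sum_univ (G : ℝ) (m q : ι → ℝ) (i : ι) :
    gravAccel G m q i = ∑ j, G * m j * (q j - q i) / |q j - q i| ^ 3 := by
  rw [gravAccel, ← sum_sdiff (subset_univ {i}), sum_singleton, sub_self, mul_zero, zero_div,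
    add_zero]

lemma sum_mul_gravAccel (G : ℝ) (m q : ι → ℝ) : ∑ i, m i * gravAccel G m q i = 0 := by
  set f : ι → ι → ℝ := fun i j => m i * (G * m j * (q j - q i) / |q j - q i| ^ 3)
  have hanti : ∀ i j, f j i = -f i j := fun i j => by
    simp only [f, abs_sub_comm (q i) (q j)]; ring
  have hS : ∑ i, ∑ j, f i j = -∑ i, ∑ j, f i j := by
    rw [← sum_neg_distrib]
    refine sum_comm.trans ?_
    exact sum_congr rfl fun i _ => by
      rw [← sum_neg_distrib]; exact sum_congr rfl fun j _ => hanti i j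
  simp only [gravAccel_eq_sum_univ, mul_sum]
  linarith

lemma gravAccel_sub_const (G : ℝ) (m q : ι → ℝ) (c : ℝ) :
    gravAccel G m (fun i => q i - c) = gravAccel G m q := by
  funext i; simp only [gravAccel, sub_sub_sub_cancel_right]

lemma gravAccel_eq_neg_mul_of_add_mul_eq_const {G lam k : ℝ} {m q : ι → ℝ}
    (hm : ∑ i, m i ≠ 0) (hq : ∑ i, m i * q i = 0)
    (hconst : ∀ i, gravAccel G m q i + lam * q i = k) (i : ι) :
    gravAccel G m q i = -lam * q i := by
  have hk : k * ∑ i, m i = 0 := by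
    calc k * ∑ i, m i = ∑ i, m i * (gravAccel G m q i + lam * q i) := by
          rw [mul_sum]; simp only [hconst, mul_comm]
      _ = 0 := by
          simp only [mul_add, sum_add_distrib, sum_mul_gravAccel, mul_left_comm _ lam, ← mul_sum,
            hq, mul_zero, add_zero]
  have := hconst i
  rw [(mul_eq_zero.1 hk).resolve_right hm] at this
  linarith

end Gravity

lemma gravAccel_euler_line (G : ℝ) (m : Fin 3 → ℝ) {x : ℝ} (hx : 0 < x) :
    gravAccel G m ![0, 1, 1 + x] 0 = G * (m 1 + m 2 / (1 + x) ^ 2) ∧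
    gravAccel G m ![0, 1, 1 + x] 1 = G * (m 2 / x ^ 2 - m 0) ∧
    gravAccel G m ![0, 1, 1 + x] 2 = -G * (m 0 / (1 + x) ^ 2 + m 1 / x ^ 2) := by
  have hx1 : |1 + x| = 1 + x := abs_of_pos (by linarith)
  have hx1' : |-x + -1| = 1 + x := by rw [abs_of_neg (by linarith)]; ring
  simp only [gravAccel_eq_sum_univ, Fin.sum_univ_three, Fin.isValue, Matrix.cons_val_zero,
    sub_self, mul_zero, abs_zero, ne_eq, OfNat.ofNat_ne_zero, not_false_eq_true, zero_pow, div_zero,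
    Matrix.cons_val_one, sub_zero, mul_one, abs_one, one_pow, div_one, zero_add, Matrix.cons_val,
    hx1, zero_sub, mul_neg, abs_neg,
    add_zero, add_sub_cancel_left, abs_of_pos hx, neg_add_rev, hx1', sub_add_cancel_left, neg_mul]
  refine ⟨?_, ?_, ?_⟩ <;> field_simp <;> ring

lemma gravAccel_euler_line_add_mul_eq (G : ℝ) (m : Fin 3 → ℝ) {x : ℝ} (hx : 0 < x)
    (hroot : eulerQuintic (m 0) (m 1) (m 2) x = 0) (i : Fin 3) :
    gravAccel G m ![0, 1, 1 + x] i
        + G * (m 1 + (m 0 + m 2) / (1 + x) ^ 2 + m 1 / x ^ 2) / (1 + x) * ![0, 1, 1 + x] i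
      = G * (m 1 + m 2 / (1 + x) ^ 2) := by
  obtain ⟨h0, h1, h2⟩ := gravAccel_euler_line G m hx
  have hx1 : 1 + x ≠ 0 := by positivity
  fin_cases i
  · simp [h0]
  · simp only [Fin.mk_one, Fin.isValue, h1, Matrix.cons_val_one, Matrix.cons_val_zero, mul_one]
    field_simp
    unfold eulerQuintic at hroot
    linear_combination -G * hroot
  · simp only [Fin.reduceFinMk, h2, Fin.isValue, neg_mul, Matrix.cons_val]
    field_simp
    ring

/-- Euler collinear central configurations: for any positive masses and any
ordering of the three bodies on a line, there exist distinct collinear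
positions with center of mass at the origin and a constant `λ > 0` such that
the gravitational acceleration on each body equals `−λ qᵢ`. -/
theorem euler_collinear_central_configuration
    (G : ℝ) (hG : 0 < G) (m : Fin 3 → ℝ) (hm : ∀ i, 0 < m i) :
    ∃ q : Fin 3 → ℝ, q 0 < q 1 ∧ q 1 < q 2 ∧ (∑ i, m i * q i) = 0 ∧
      ∃ lam : ℝ, 0 < lam ∧
        ∀ i : Fin 3,
          (∑ j ∈ Finset.univ \ {i}, G * m j * (q j - q i) / |q j - q i| ^ 3)
            = -lam * q i := by
  obtain ⟨x, hx, hroot⟩ := exists_pos_eulerQuintic_eq_zero (hm 0).le (hm 1) (hm 2).le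
  have hM : ∑ i, m i ≠ 0 := (sum_pos (fun i _ => hm i) univ_nonempty).ne'
  set p : Fin 3 → ℝ := ![0, 1, 1 + x]
  set c₀ := univ.centerMass m p
  set lam := G * (m 1 + (m 0 + m 2) / (1 + x) ^ 2 + m 1 / x ^ 2) / (1 + x)
  have hlam : 0 < lam := by have := hm 0; have := hm 1; have := hm 2; positivity
  refine ⟨fun i => p i - c₀, by simp [p], by simp [p, hx], sum_mul_sub_centerMass hM p,
    lam, hlam,
    gravAccel_eq_neg_mul_of_add_mul_eq_const hM (sum_mul_sub_centerMass hM p)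
      (k := G * (m 1 + m 2 / (1 + x) ^ 2) - lam * c₀) fun i => ?_⟩
  rw [gravAccel_sub_const, ← gravAccel_euler_line_add_mul_eq G m hx hroot i]
  ring
end

section
/- Euler's quintic equation has a unique positive root: for any positive masses m₁, m₂, m₃, the polynomial (m₁+m₂)x⁵ + (3m₁+2m₂)x⁴ + (3m₁+m₂)x³ − (m₂+3m₃)x² − (2m₂+3m₃)x − (m₂+m₃) has exactly one root in (0, ∞). -/
/-!
The coefficients of Euler's quintic have the sign pattern `+ + + − − −`, a single sign change,
so by Descartes' rule of signs it has at most one positive root. It is negative at `0` and has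
positive leading coefficient, so the intermediate value theorem provides one.
-/

open Set

namespace Polynomial

theorem eq_of_isRoot_of_signVariations_le_one {R : Type*} [CommRing R] [LinearOrder R]
    [IsStrictOrderedRing R] {P : R[X]} (hP : P ≠ 0) (hs : P.signVariations ≤ 1) {x y : R}
    (hx : 0 < x) (hy : 0 < y) (hPx : P.IsRoot x) (hPy : P.IsRoot y) : x = y := by
  by_contra hxy
  have hnodup : ({x, y} : Multiset R).Nodup :=
    Multiset.nodup_cons.mpr ⟨by simpa using hxy, Multiset.nodup_singleton y⟩
  have hsub : ({x, y} : Multiset R) ≤ P.roots :=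
    (Multiset.le_iff_subset hnodup).mpr <| by simpa [hP] using ⟨hPx, hPy⟩
  have hpair : ({x, y} : Multiset R).countP (0 < ·) = 2 := by
    rw [Multiset.countP_eq_card.mpr (by simp [hx, hy])]
    simp
  have := Multiset.countP_le_of_le (0 < ·) hsub
  have := P.roots_countP_pos_le_signVariations
  omega

theorem exists_pos_isRoot_of_eval_zero_neg {P : ℝ[X]} (h0 : P.eval 0 < 0)
    (hlead : 0 < P.leadingCoeff) : ∃ x, 0 < x ∧ P.IsRoot x := by
  have hdeg : 0 < P.degree := by
    by_contra! hdeg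
    rw [eq_C_of_degree_le_zero hdeg] at h0 hlead
    simp only [eval_C, leadingCoeff_C] at h0 hlead
    linarith
  exact intermediate_value_Ioi P.continuousOn
    (P.tendsto_atTop_of_leadingCoeff_nonneg hdeg hlead.le) (show (0 : ℝ) ∈ Ioi (P.eval 0) from h0)

theorem existsUnique_pos_isRoot_of_signVariations_le_one {P : ℝ[X]} (h0 : P.eval 0 < 0)
    (hlead : 0 < P.leadingCoeff) (hs : P.signVariations ≤ 1) : ∃! x, 0 < x ∧ P.IsRoot x := by
  obtain ⟨x, hx, hPx⟩ := exists_pos_isRoot_of_eval_zero_neg h0 hlead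
  exact ⟨x, ⟨hx, hPx⟩, fun y ⟨hy, hPy⟩ =>
    eq_of_isRoot_of_signVariations_le_one (leadingCoeff_ne_zero.mp hlead.ne') hs hy hx hPy hPx⟩

theorem signVariations_quintic {a b c d e f : ℝ} (ha : 0 < a) (hb : 0 < b) (hc : 0 < c)
    (hd : 0 < d) (he : 0 < e) (hf : 0 < f) :
    (C a * X ^ 5 + C b * X ^ 4 + C c * X ^ 3 - C d * X ^ 2 - C e * X - C f).signVariations
      = 1 := by
  have hdeg :
      (C a * X ^ 5 + C b * X ^ 4 + C c * X ^ 3 - C d * X ^ 2 - C e * X - C f).degree = 5 := by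
    compute_degree!
    exact ha.ne'
  have hcoeffs :
      (C a * X ^ 5 + C b * X ^ 4 + C c * X ^ 3 - C d * X ^ 2 - C e * X - C f).coeffList
        = [a, b, c, -d, -e, -f] := by
    rw [coeffList, hdeg]
    simp [List.range_succ, coeff_X, coeff_C, coeff_X_pow]
  have hsigns : [a, b, c, -d, -e, -f].map SignType.sign = [1, 1, 1, -1, -1, -1] := by
    simp [ha, hb, hc, hd, he, hf]
  rw [signVariations, hcoeffs, hsigns]
  decide

theorem existsUnique_pos_isRoot_quintic {a b c d e f : ℝ} (ha : 0 < a) (hb : 0 < b)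
    (hc : 0 < c) (hd : 0 < d) (he : 0 < e) (hf : 0 < f) :
    ∃! x, 0 < x ∧
      (C a * X ^ 5 + C b * X ^ 4 + C c * X ^ 3 - C d * X ^ 2 - C e * X - C f).IsRoot x := by
  have hdeg :
      (C a * X ^ 5 + C b * X ^ 4 + C c * X ^ 3 - C d * X ^ 2 - C e * X - C f).natDegree = 5 := by
    compute_degree!
    exact ha.ne'
  refine existsUnique_pos_isRoot_of_signVariations_le_one ?_ ?_
    (signVariations_quintic ha hb hc hd he hf).le
  · simpa using hf
  · simpa [leadingCoeff, hdeg, coeff_X, coeff_C, coeff_X_pow] using ha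

end Polynomial

/-- Euler's quintic equation has a unique positive root: for positive masses
`m₁ m₂ m₃`, the polynomial
`(m₁+m₂)x⁵ + (3m₁+2m₂)x⁴ + (3m₁+m₂)x³ − (m₂+3m₃)x² − (2m₂+3m₃)x − (m₂+m₃)`
has exactly one root in `(0, ∞)`. -/
theorem euler_quintic_unique_positive_root
    (m₁ m₂ m₃ : ℝ) (h₁ : 0 < m₁) (h₂ : 0 < m₂) (h₃ : 0 < m₃) :
    ∃! x : ℝ, 0 < x ∧
      (m₁ + m₂) * x ^ 5 + (3 * m₁ + 2 * m₂) * x ^ 4 + (3 * m₁ + m₂) * x ^ 3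
        - (m₂ + 3 * m₃) * x ^ 2 - (2 * m₂ + 3 * m₃) * x - (m₂ + m₃) = 0 := by
  simpa using Polynomial.existsUnique_pos_isRoot_quintic (a := m₁ + m₂) (b := 3 * m₁ + 2 * m₂)
    (c := 3 * m₁ + m₂) (d := m₂ + 3 * m₃) (e := 2 * m₂ + 3 * m₃) (f := m₂ + m₃)
    (by positivity) (by positivity) (by positivity) (by positivity) (by positivity) (by positivity)
end

section
/- Gascheau's stability criterion: the linearization at the equilateral point L₄ of the planar circular restricted three-body problem has four purely imaginary eigenvalues (hence L₄ is spectrally stable) if and only if 27 μ(1−μ) < 1, i.e. μ < (1 − √(23/27))/2. -/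
/-!
Writing `λ = i t` with `t` real turns the characteristic equation into `t⁴ - t² + p = 0`,
`p = (27/4) μ(1 - μ)`. Since `t⁴ - t² + p = (t² - 1/2)² + (p - 1/4)`, for `p ≥ 1/4` every real root
has `t² = 1/2`, leaving at most two of them. For `0 < p < 1/4` the quadratic `s² - s + p` has two
distinct positive roots, and their square roots `±√s₁, ±√s₂` are four distinct real roots.
-/

open Complex Function

theorem ofReal_mul_I_quartic (t p : ℝ) :
    ((t : ℂ) * I) ^ 4 + ((t : ℂ) * I) ^ 2 + p = ((t ^ 4 - t ^ 2 + p : ℝ) : ℂ) := by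
  have hI4 : I ^ 4 = 1 := by rw [show 4 = 2 * 2 from rfl, pow_mul, I_sq]; norm_num
  push_cast
  rw [mul_pow, mul_pow, I_sq, hI4]
  ring

theorem quartic_eq_zero_iff_of_re_eq_zero {z : ℂ} (hz : z.re = 0) (p : ℝ) :
    z ^ 4 + z ^ 2 + p = 0 ↔ z.im ^ 4 - z.im ^ 2 + p = 0 := by
  have hz' : z = (z.im : ℂ) * I := by simpa [hz] using (re_add_im z).symm
  rw [hz', ofReal_mul_I_quartic, ofReal_eq_zero, mul_I_im, ofReal_re]

theorem exists_injective_imaginary_roots_iff {ι : Type*} (p : ℝ) :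
    (∃ l : ι → ℂ, Injective l ∧ ∀ i, (l i).re = 0 ∧ l i ^ 4 + l i ^ 2 + p = 0) ↔
      ∃ f : ι → ℝ, Injective f ∧ ∀ i, f i ^ 4 - f i ^ 2 + p = 0 := by
  constructor
  · rintro ⟨l, hl, hroot⟩
    refine ⟨fun i ↦ (l i).im, fun i j hij ↦ hl (ext ?_ hij), fun i ↦ ?_⟩
    · rw [(hroot i).1, (hroot j).1]
    · exact (quartic_eq_zero_iff_of_re_eq_zero (hroot i).1 p).1 (hroot i).2
  · rintro ⟨f, hf, hroot⟩
    refine ⟨fun i ↦ (f i : ℂ) * I, ?_, fun i ↦ ⟨by simp, ?_⟩⟩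
    · exact (mul_left_injective₀ I_ne_zero).comp (ofReal_injective.comp hf)
    · rw [ofReal_mul_I_quartic, hroot i, ofReal_zero]

theorem not_injective_of_sq_eq {R : Type*} [CommRing R] [NoZeroDivisors R]
    (f : Fin 3 → R) (c : R) (hf : ∀ i, f i ^ 2 = c) : ¬ Injective f := by
  intro hinj
  have hpm : ∀ i j, f i = f j ∨ f i = -f j := fun i j ↦
    sq_eq_sq_iff_eq_or_eq_neg.1 ((hf i).trans (hf j).symm)
  have h10 : f 1 = -f 0 := (hpm 1 0).resolve_left fun h ↦ absurd (hinj h) (by decide)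
  have h20 : f 2 = -f 0 := (hpm 2 0).resolve_left fun h ↦ absurd (hinj h) (by decide)
  exact absurd (hinj (h10.trans h20.symm)) (by decide)

theorem four_mul_lt_one_of_injective_quartic_roots {p : ℝ} {f : Fin 4 → ℝ} (hf : Injective f)
    (hroot : ∀ i, f i ^ 4 - f i ^ 2 + p = 0) : 4 * p < 1 := by
  by_contra! hp
  have hsq : ∀ i, f i ^ 2 = 1 / 2 := fun i ↦ by
    nlinarith [hroot i, sq_nonneg (f i ^ 2 - 1 / 2)]
  exact not_injective_of_sq_eq (f ∘ Fin.castSucc) _ (fun i ↦ hsq _)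
    (hf.comp (Fin.castSucc_injective 3))

theorem exists_pos_quadratic_roots {p : ℝ} (hp : 0 < p) (hp4 : 4 * p < 1) :
    ∃ s₁ s₂ : ℝ, 0 < s₂ ∧ s₂ < s₁ ∧ s₁ ^ 2 - s₁ + p = 0 ∧ s₂ ^ 2 - s₂ + p = 0 := by
  have hd : √(1 - 4 * p) ^ 2 = 1 - 4 * p := Real.sq_sqrt (by linarith)
  have hd0 : 0 < √(1 - 4 * p) := Real.sqrt_pos.2 (by linarith)
  refine ⟨(1 + √(1 - 4 * p)) / 2, (1 - √(1 - 4 * p)) / 2, ?_, by linarith, by nlinarith,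
    by nlinarith⟩
  nlinarith

theorem quartic_sqrt_eq_zero_of_quadratic_eq_zero {s p : ℝ} (hs : 0 ≤ s) (hroot : s ^ 2 - s + p = 0) :
    √s ^ 4 - √s ^ 2 + p = 0 := by
  rw [show √s ^ 4 = (√s ^ 2) ^ 2 by ring, Real.sq_sqrt hs, hroot]

theorem injective_vec_pm {R : Type*} [Field R] [LinearOrder R] [IsStrictOrderedRing R]
    {a b : R} (hb : 0 < b) (hab : b < a) : Injective ![a, -a, b, -b] := by
  intro i j h
  fin_cases i <;> fin_cases j <;> first | rfl | (simp at h; linarith)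

theorem exists_injective_quartic_roots {p : ℝ} (hp : 0 < p) (hp4 : 4 * p < 1) :
    ∃ f : Fin 4 → ℝ, Injective f ∧ ∀ i, f i ^ 4 - f i ^ 2 + p = 0 := by
  obtain ⟨s₁, s₂, hs₂, hs, h₁, h₂⟩ := exists_pos_quadratic_roots hp hp4
  have hr₁ := quartic_sqrt_eq_zero_of_quadratic_eq_zero (hs₂.trans hs).le h₁
  have hr₂ := quartic_sqrt_eq_zero_of_quadratic_eq_zero hs₂.le h₂
  refine ⟨_, injective_vec_pm (Real.sqrt_pos.2 hs₂) (Real.sqrt_lt_sqrt hs₂.le hs), fun i ↦ ?_⟩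
  fin_cases i <;> simp [even_two.neg_pow, (by decide : Even 4).neg_pow, hr₁, hr₂]

theorem gascheau_threshold_iff {μ : ℝ} (hμ : μ < 1 / 2) :
    27 * μ * (1 - μ) < 1 ↔ μ < (1 - √(23 / 27)) / 2 := by
  have hc : √(23 / 27) ^ 2 = 23 / 27 := Real.sq_sqrt (by norm_num)
  have hc0 : 0 < √(23 / 27) := Real.sqrt_pos.2 (by norm_num)
  constructor <;> intro h <;>
    nlinarith [sq_nonneg (1 - 2 * μ - √(23 / 27)), sq_nonneg (1 - 2 * μ + √(23 / 27))]

/-- Gascheau's stability criterion: the linearization at `L₄` of the planar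
circular restricted three-body problem, with characteristic polynomial
`λ⁴ + λ² + (27/4)μ(1−μ)`, has four distinct purely imaginary eigenvalues if and
only if `27μ(1−μ) < 1`, i.e. `μ < (1 − √(23/27))/2`. -/
theorem gascheau_criterion (μ : ℝ) (hμ0 : 0 < μ) (hμ2 : μ < 1 / 2) :
    ((∃ l : Fin 4 → ℂ, Function.Injective l ∧
        ∀ i, (l i).re = 0 ∧
          l i ^ 4 + l i ^ 2 + (27 / 4) * (μ : ℂ) * (1 - (μ : ℂ)) = 0)
      ↔ 27 * μ * (1 - μ) < 1) ∧
    (27 * μ * (1 - μ) < 1 ↔ μ < (1 - Real.sqrt (23 / 27)) / 2) := by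
  set p : ℝ := 27 / 4 * μ * (1 - μ) with hp_def
  have hp : 0 < p := mul_pos (mul_pos (by norm_num) hμ0) (by linarith)
  have hcast : (27 / 4 : ℂ) * μ * (1 - μ) = p := by push_cast [hp_def]; ring
  refine ⟨?_, gascheau_threshold_iff hμ2⟩
  simp_rw [hcast, exists_injective_imaginary_roots_iff]
  constructor
  · rintro ⟨f, hf, hroot⟩
    linarith [four_mul_lt_one_of_injective_quartic_roots hf hroot]
  · exact fun h ↦ exists_injective_quartic_roots hp (by linarith)
end
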